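/- Minimality of the quotient on edges: suppose V is finite. If R is any equivalence relation on V that is also an ontological bisimulation with respect to E and S, and R≃ denotes the ontological bisimilarity relation (which is an equivalence relation containing R), then the number of edges of the quotient graph of (V, E) by R≃ is less than or equal to the number of edges of the quotient graph of (V, E) by R. -/
import Mathlib


/-- A relation `R` is an ontological bisimulation with respect to the edge
relation `E` and the concept-similarity relation `S`. -/
def IsOntoBisim {V : Type*} (E S : V → V → Prop) (R : V → V → Prop) : Prop :=
  ∀ a b, R a b →
    S a b ∧
    ((∀ a', E a' a → ∃ b', E b' b ∧ R a' b') ∧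
     (∀ b', E b' b → ∃ a', E a' a ∧ R a' b')) ∧
    ((∀ a'', E a a'' → ∃ b'', E b b'' ∧ R a'' b'') ∧
     (∀ b'', E b b'' → ∃ a'', E a a'' ∧ R a'' b''))

/-- The ontological bisimilarity relation `R≃`. -/
def Bisimilar {V : Type*} (E S : V → V → Prop) (a b : V) : Prop :=
  ∃ R, IsOntoBisim E S R ∧ R a b

/-- Edge relation of the quotient graph of `(V, E)` by `R`: there is an edge
from class `x` to class `y` iff some representatives are `E`-related. -/
def QuotEdge {V : Type*} (E : V → V → Prop) (R : V → V → Prop) :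
    Quot R → Quot R → Prop :=
  fun x y => ∃ a b, x = Quot.mk R a ∧ y = Quot.mk R b ∧ E a b

/-- Minimality of the quotient on edges: the quotient graph by `R≃` has at
most as many edges as the quotient graph by any equivalence relation that is
an ontological bisimulation. -/
theorem bisimilar_quotient_edges_min {V : Type*} [Finite V]
    (E S : V → V → Prop) (hS : Equivalence S)
    (R : V → V → Prop) (hRequiv : Equivalence R) (hRbisim : IsOntoBisim E S R) :
    Nat.card {p : Quot (Bisimilar E S) × Quot (Bisimilar E S) //
        QuotEdge E (Bisimilar E S) p.1 p.2} ≤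
      Nat.card {p : Quot R × Quot R // QuotEdge E R p.1 p.2} := by
  classical
  have hsub : ∀ a b : V, R a b → Bisimilar E S a b := fun a b h => ⟨R, hRbisim, h⟩
  have key : ∀ p : {p : Quot (Bisimilar E S) × Quot (Bisimilar E S) //
      QuotEdge E (Bisimilar E S) p.1 p.2},
      ∃ q : {p : Quot R × Quot R // QuotEdge E R p.1 p.2}, ∃ a b : V,
        p.1.1 = Quot.mk _ a ∧ p.1.2 = Quot.mk _ b ∧
        q.1.1 = Quot.mk R a ∧ q.1.2 = Quot.mk R b := by
    rintro ⟨⟨x, y⟩, a, b, hx, hy, hE⟩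
    exact ⟨⟨(Quot.mk R a, Quot.mk R b), a, b, rfl, rfl, hE⟩, a, b, hx, hy, rfl, rfl⟩
  choose f hf using key
  have hR' : ∀ a b : V, Quot.mk R a = Quot.mk R b → R a b := by
    intro a b h
    exact hRequiv.eqvGen_iff.mp (Quot.eq.mp h)
  have hinj : Function.Injective f := by
    intro p q hpq
    obtain ⟨a1, b1, hx1, hy1, hu1, hv1⟩ := hf p
    obtain ⟨a2, b2, hx2, hy2, hu2, hv2⟩ := hf q
    have ha : R a1 a2 := hR' _ _ (by rw [← hu1, ← hu2, hpq])
    have hb : R b1 b2 := hR' _ _ (by rw [← hv1, ← hv2, hpq])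
    apply Subtype.ext
    apply Prod.ext
    · rw [hx1, hx2]; exact Quot.sound (hsub _ _ ha)
    · rw [hy1, hy2]; exact Quot.sound (hsub _ _ hb)
  exact Nat.card_le_card_of_injective f hinj
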